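/- Carleson bound for the constructed auxiliary family: let {λ_Q} be non-negative, σ and ω locally finite Borel measures, and {a_Q} a family of positive reals. Define d_Q := a_Q · sup_{R ⊇ Q} ( (1/σ(R)) ∑_{S ⊆ R} λ_S a_S^{−1} ω(S) ), assuming all these suprema are finite and positive. Then for every dyadic cube P, ∑_{Q ⊆ P} λ_Q d_Q^{−1} ω(Q) ≤ σ(P). -/

import Mathlib

open MeasureTheory ENNReal Filter
open scoped NNReal ENNReal

/-- A dyadic cube `2^k([0,1)^d + j)` in `ℝ^d`. -/
structure DyadicCube (d : ℕ) where
  k : ℤ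
  j : Fin d → ℤ

/-- The underlying set of a dyadic cube. -/
def DyadicCube.toSet {d : ℕ} (Q : DyadicCube d) : Set (Fin d → ℝ) :=
  {x | ∀ i, (2:ℝ) ^ Q.k * (Q.j i) ≤ x i ∧ x i < (2:ℝ) ^ Q.k * (Q.j i + 1)}

/-- The collection `𝒬` of cubes contributing to the two-weight inequality:
`λ_Q > 0`, `σ(Q) > 0` and `ω(Q) > 0`. -/
def memQcal {d : ℕ} (lam : DyadicCube d → ℝ≥0) (σ ω : Measure (Fin d → ℝ))
    (Q : DyadicCube d) : Prop :=
  0 < lam Q ∧ 0 < σ Q.toSet ∧ 0 < ω Q.toSet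

/-!
For each cube `Q ∈ 𝒬` below `P` let `M(Q)` be the largest cube of `𝒬` with `Q ⊆ M(Q) ⊆ P`; by
the nesting property of dyadic cubes, distinct such maximal cubes are disjoint. Taking `R = M(Q)`
in the supremum gives `d_Q⁻¹ ≤ a_Q⁻¹ σ(M(Q)) / T(M(Q))`, where `T(R) = ∑_{S ⊆ R} λ_S a_S⁻¹ ω(S)`.
Hence the terms with `M(Q) = R` add up to at most `T(R) / (T(R) / σ(R)) ≤ σ(R)`, and summing over
the disjoint maximal cubes inside `P` gives at most `σ(P)`. In `ℝ≥0∞` the last inequality needs no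
finiteness or positivity of `T(R)` or `σ(R)`.
-/

lemma ENNReal.div_div_le (a b : ℝ≥0∞) : a / (a / b) ≤ b := by
  rcases eq_or_ne a 0 with rfl | h₀
  · simp
  rcases eq_or_ne a ∞ with rfl | h₁
  · rcases eq_or_ne b ∞ with rfl | hb
    · simp
    · simp [ENNReal.top_div_of_ne_top hb]
  exact (ENNReal.div_div_cancel h₀ h₁).le

lemma MeasureTheory.tsum_le_measure_of_fiberwise {α β X : Type*} [Countable β]
    [MeasurableSpace X] (μ : Measure X) (f : α → ℝ≥0∞) (M : α → β) (E : β → Set X)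
    (hE : ∀ b, MeasurableSet (E b)) (hdisj : (Set.range M).PairwiseDisjoint E)
    (hfib : ∀ b, ∑' a : M ⁻¹' {b}, f a ≤ μ (E b)) {S : Set X}
    (hS : ∀ a, E (M a) ⊆ S) :
    ∑' a, f a ≤ μ S :=
  calc ∑' a, f a = ∑' b, ∑' a : M ⁻¹' {b}, f a := (ENNReal.tsum_fiberwise f M).symm
    _ = ∑' b : Set.range M, ∑' a : M ⁻¹' {b.1}, f a := by
      refine (tsum_subtype_eq_of_support_subset fun b hb => ?_).symm
      by_contra hbM
      have : IsEmpty (M ⁻¹' {b}) := ⟨fun a => hbM ⟨a, a.2⟩⟩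
      exact hb tsum_empty
    _ ≤ ∑' b : Set.range M, μ (E b) := ENNReal.tsum_le_tsum fun b => hfib b
    _ = μ (⋃ b ∈ Set.range M, E b) :=
      (measure_biUnion (Set.to_countable _) hdisj fun b _ => hE b).symm
    _ ≤ μ S := measure_mono (Set.iUnion₂_subset fun _ ⟨a, ha⟩ => ha ▸ hS a)

namespace DyadicCube

variable {d : ℕ}

instance : Countable (DyadicCube d) :=
  Function.Injective.countable (f := fun Q : DyadicCube d => (Q.k, Q.j))
    fun Q R h => by cases Q; cases R; simpa using h

lemma mem_toSet_iff {Q : DyadicCube d} {x : Fin d → ℝ} :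
    x ∈ Q.toSet ↔ ∀ i, ⌊x i / 2 ^ Q.k⌋ = Q.j i := by
  have h : (0 : ℝ) < 2 ^ Q.k := zpow_pos two_pos _
  simp only [toSet, Set.mem_ofPred_eq, Int.floor_eq_iff, le_div_iff₀ h, div_lt_iff₀ h, mul_comm]

lemma corner_mem_toSet (Q : DyadicCube d) : (fun i => 2 ^ Q.k * (Q.j i : ℝ)) ∈ Q.toSet :=
  mem_toSet_iff.2 fun i => by
    rw [mul_div_cancel_left₀ _ (zpow_ne_zero Q.k two_ne_zero), Int.floor_intCast]

lemma floor_div_zpow_two_of_le {k l : ℤ} (hkl : k ≤ l) (t : ℝ) :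
    ⌊t / 2 ^ l⌋ = ⌊t / 2 ^ k⌋ / 2 ^ (l - k).toNat := by
  have hl : (2 : ℝ) ^ l = 2 ^ k * ((2 ^ (l - k).toNat : ℕ) : ℝ) := by
    rw [Nat.cast_pow, Nat.cast_ofNat, ← zpow_natCast, ← zpow_add₀ two_ne_zero]
    congr 1; omega
  rw [hl, ← div_div, Int.floor_div_natCast]
  push_cast; rfl

lemma toSet_subset_of_k_le {Q R : DyadicCube d} (hk : Q.k ≤ R.k)
    (h : (Q.toSet ∩ R.toSet).Nonempty) : Q.toSet ⊆ R.toSet := by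
  obtain ⟨x, hxQ, hxR⟩ := h
  intro y hy
  rw [mem_toSet_iff] at *
  intro i
  rw [← hxR i, floor_div_zpow_two_of_le hk, floor_div_zpow_two_of_le hk, hy i, hxQ i]

lemma eq_of_toSet_subset_of_k_eq {Q R : DyadicCube d} (h : Q.toSet ⊆ R.toSet)
    (hk : Q.k = R.k) : Q = R := by
  obtain ⟨kQ, jQ⟩ := Q
  obtain ⟨kR, jR⟩ := R
  obtain rfl : kQ = kR := hk
  have hj := mem_toSet_iff.1 (h (corner_mem_toSet _))
  have hj' := mem_toSet_iff.1 (corner_mem_toSet ⟨kQ, jQ⟩)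
  congr
  funext i
  exact (hj' i).symm.trans (hj i)

lemma toSet_eq_pi (Q : DyadicCube d) :
    Q.toSet = Set.univ.pi fun i => Set.Ico (2 ^ Q.k * (Q.j i : ℝ)) (2 ^ Q.k * (Q.j i + 1)) := by
  ext x; simp [toSet]

lemma measurableSet_toSet (Q : DyadicCube d) : MeasurableSet Q.toSet := by
  rw [toSet_eq_pi]
  exact .univ_pi fun _ => measurableSet_Ico

lemma k_le_of_toSet_subset {Q R : DyadicCube d} (i : Fin d) (h : Q.toSet ⊆ R.toSet) :
    Q.k ≤ R.k := by
  have hside := Set.image_mono (f := fun x : Fin d → ℝ => x i) h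
  rw [toSet_eq_pi, toSet_eq_pi, Set.eval_image_univ_pi, Set.eval_image_univ_pi] at hside
  · have hQ : (0 : ℝ) < 2 ^ Q.k := zpow_pos two_pos _
    obtain ⟨hl, hu⟩ := (Set.Ico_subset_Ico_iff (by nlinarith)).1 hside
    have : (2 : ℝ) ^ Q.k ≤ 2 ^ R.k := by nlinarith
    exact (zpow_le_zpow_iff_right₀ _root_.one_lt_two).1 this
  all_goals exact toSet_eq_pi _ ▸ ⟨_, corner_mem_toSet _⟩

lemma toSet_eq_univ (Q : DyadicCube 0) : Q.toSet = Set.univ :=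
  Set.eq_univ_of_forall fun _ => mem_toSet_iff.2 finZeroElim

lemma exists_maximal_cube (hd : 0 < d) (p : DyadicCube d → Prop) {P Q : DyadicCube d}
    (hQ : p Q) (hQP : Q.toSet ⊆ P.toSet) :
    ∃ R, (p R ∧ Q.toSet ⊆ R.toSet ∧ R.toSet ⊆ P.toSet) ∧
      ∀ R', p R' → Q.toSet ⊆ R'.toSet → R'.toSet ⊆ P.toSet → R'.k ≤ R.k := by
  obtain ⟨_, ⟨R, hR, rfl⟩, hmax⟩ := Int.exists_greatest_of_bdd
    (P := fun k => ∃ R : DyadicCube d, (p R ∧ Q.toSet ⊆ R.toSet ∧ R.toSet ⊆ P.toSet) ∧ R.k = k)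
    ⟨P.k, fun _ ⟨_, ⟨_, _, hRP⟩, hk⟩ => hk ▸ k_le_of_toSet_subset ⟨0, hd⟩ hRP⟩
    ⟨Q.k, Q, ⟨hQ, subset_rfl, hQP⟩, rfl⟩
  exact ⟨R, hR, fun R' h₁ h₂ h₃ => hmax R'.k ⟨R', ⟨h₁, h₂, h₃⟩, rfl⟩⟩

lemma exists_stopping_cubes (p : DyadicCube d → Prop) (P : DyadicCube d) :
    ∃ M : {Q : DyadicCube d // p Q ∧ Q.toSet ⊆ P.toSet} → DyadicCube d,
      (∀ Q, p (M Q) ∧ Q.1.toSet ⊆ (M Q).toSet ∧ (M Q).toSet ⊆ P.toSet) ∧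
      (Set.range M).PairwiseDisjoint toSet := by
  rcases Nat.eq_zero_or_pos d with rfl | hd
  · cases isEmpty_or_nonempty {Q : DyadicCube 0 // p Q ∧ Q.toSet ⊆ P.toSet} with
    | inl _ =>
      refine ⟨isEmptyElim, isEmptyElim, ?_⟩
      rw [Set.range_eq_empty]
      exact Set.pairwiseDisjoint_empty
    | inr h =>
      obtain ⟨Q₀⟩ := h
      refine ⟨fun _ => Q₀.1, fun _ => ⟨Q₀.2.1, by simp [toSet_eq_univ]⟩, ?_⟩
      rintro _ ⟨_, rfl⟩ _ ⟨_, rfl⟩ h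
      exact (h rfl).elim
  choose M hM hmax using fun Q : {Q // p Q ∧ Q.toSet ⊆ P.toSet} =>
    exists_maximal_cube hd p Q.2.1 Q.2.2
  refine ⟨M, hM, ?_⟩
  rintro _ ⟨Q, rfl⟩ _ ⟨Q', rfl⟩ hne
  rw [Function.onFun, Set.disjoint_iff_inter_eq_empty, ← Set.not_nonempty_iff_eq_empty]
  intro hint
  apply hne
  -- the smaller of two intersecting maximal cubes lies in the larger, hence equals it
  wlog hk : (M Q).k ≤ (M Q').k generalizing Q Q'
  · exact (this Q' Q (Ne.symm hne) (Set.inter_comm _ _ ▸ hint) (le_of_not_ge hk)).symm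
  have hsub := toSet_subset_of_k_le hk hint
  refine eq_of_toSet_subset_of_k_eq hsub (hk.antisymm ?_)
  exact hmax Q _ (hM Q').1 ((hM Q).2.1.trans hsub) (hM Q').2.2

variable (p : DyadicCube d → Prop) (w : DyadicCube d → ℝ≥0∞) (σ : Measure (Fin d → ℝ))

noncomputable def sumInside (R : DyadicCube d) : ℝ≥0∞ :=
  ∑' S : {S : DyadicCube d // p S ∧ S.toSet ⊆ R.toSet}, w S.1

noncomputable def supDensity (Q : DyadicCube d) : ℝ≥0∞ :=
  ⨆ R : {R : DyadicCube d // p R ∧ Q.toSet ⊆ R.toSet}, (σ R.1.toSet)⁻¹ * sumInside p w R.1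

variable {p w}

lemma le_supDensity {Q R : DyadicCube d} (hR : p R) (hQR : Q.toSet ⊆ R.toSet) :
    (σ R.toSet)⁻¹ * sumInside p w R ≤ supDensity p w σ Q :=
  le_iSup (fun R : {R // p R ∧ Q.toSet ⊆ R.toSet} => (σ R.1.toSet)⁻¹ * sumInside p w R.1)
    ⟨R, hR, hQR⟩

lemma tsum_comp_le_sumInside {ι : Type*} {f : ι → DyadicCube d} (hf : Function.Injective f)
    {R : DyadicCube d} (hfR : ∀ i, p (f i) ∧ (f i).toSet ⊆ R.toSet) :
    ∑' i, w (f i) ≤ sumInside p w R :=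
  ENNReal.tsum_comp_le_tsum_of_injective
    (f := fun i => (⟨f i, hfR i⟩ : {S // p S ∧ S.toSet ⊆ R.toSet}))
    (fun _ _ h => hf (congrArg Subtype.val h)) fun S => w S.1

theorem tsum_mul_inv_supDensity_le (P : DyadicCube d) :
    ∑' Q : {Q : DyadicCube d // p Q ∧ Q.toSet ⊆ P.toSet}, w Q.1 * (supDensity p w σ Q.1)⁻¹ ≤
      σ P.toSet := by
  obtain ⟨M, hM, hdisj⟩ := exists_stopping_cubes p P
  refine tsum_le_measure_of_fiberwise σ _ M toSet measurableSet_toSet hdisj ?_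
    fun Q => (hM Q).2.2
  intro R
  have hfib : ∀ Q : M ⁻¹' {R}, M Q = R := fun Q => Q.2
  calc ∑' Q : M ⁻¹' {R}, w Q.1.1 * (supDensity p w σ Q.1.1)⁻¹
      ≤ ∑' Q : M ⁻¹' {R}, w Q.1.1 * ((σ R.toSet)⁻¹ * sumInside p w R)⁻¹ := by
        refine ENNReal.tsum_le_tsum fun Q => ?_
        gcongr
        have h := le_supDensity (w := w) σ (hM Q).1 (hM Q).2.1
        rwa [hfib Q] at h
    _ = (∑' Q : M ⁻¹' {R}, w Q.1.1) * ((σ R.toSet)⁻¹ * sumInside p w R)⁻¹ :=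
        ENNReal.tsum_mul_right
    _ ≤ sumInside p w R * ((σ R.toSet)⁻¹ * sumInside p w R)⁻¹ := by
        gcongr
        refine tsum_comp_le_sumInside (fun _ _ h => Subtype.val_injective (Subtype.val_injective h))
          fun Q => ⟨Q.1.2.1, (hM Q).2.1.trans (congrArg toSet (hfib Q)).subset⟩
    _ ≤ σ R.toSet := by
        rw [mul_comm _ (sumInside p w _), ← div_eq_mul_inv, ← div_eq_mul_inv]
        exact ENNReal.div_div_le _ _

end DyadicCube

theorem stmt15_general (d : ℕ) (σ ω : Measure (Fin d → ℝ))
    (lam : DyadicCube d → ℝ≥0) (a : DyadicCube d → ℝ≥0∞)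
    (ha : ∀ Q, 0 < a Q ∧ a Q < ∞)
    (dd : DyadicCube d → ℝ≥0∞)
    (hdd : ∀ Q : DyadicCube d,
      dd Q = a Q *
        ⨆ R : {R : DyadicCube d // memQcal lam σ ω R ∧ Q.toSet ⊆ R.toSet},
          (σ R.1.toSet)⁻¹ *
            ∑' S : {S : DyadicCube d // memQcal lam σ ω S ∧ S.toSet ⊆ R.1.toSet},
              (lam S.1 : ℝ≥0∞) * (a S.1)⁻¹ * ω S.1.toSet) :
    ∀ P : DyadicCube d,
      (∑' Q : {Q : DyadicCube d // memQcal lam σ ω Q ∧ Q.toSet ⊆ P.toSet},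
        (lam Q.1 : ℝ≥0∞) * (dd Q.1)⁻¹ * ω Q.1.toSet) ≤ σ P.toSet := by
  intro P
  let w : DyadicCube d → ℝ≥0∞ := fun S => lam S * (a S)⁻¹ * ω S.toSet
  have hterm : ∀ Q, (lam Q : ℝ≥0∞) * (dd Q)⁻¹ * ω Q.toSet =
      w Q * (DyadicCube.supDensity (memQcal lam σ ω) w σ Q)⁻¹ := fun Q => by
    rw [show dd Q = a Q * DyadicCube.supDensity (memQcal lam σ ω) w σ Q from hdd Q,
      ENNReal.mul_inv (.inl (ha Q).1.ne') (.inl (ha Q).2.ne)]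
    ring
  simpa only [hterm] using DyadicCube.tsum_mul_inv_supDensity_le σ P

/-- Carleson bound for the constructed auxiliary family
`d_Q := a_Q · sup_{R ⊇ Q} (1/σ(R)) ∑_{S ⊆ R} λ_S a_S⁻¹ ω(S)`. -/
theorem stmt15 (d : ℕ) (σ ω : Measure (Fin d → ℝ))
    [IsLocallyFiniteMeasure σ] [IsLocallyFiniteMeasure ω]
    (lam : DyadicCube d → ℝ≥0) (a : DyadicCube d → ℝ≥0∞)
    (ha : ∀ Q, 0 < a Q ∧ a Q < ∞)
    (dd : DyadicCube d → ℝ≥0∞)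
    (hdd : ∀ Q : DyadicCube d,
      dd Q = a Q *
        ⨆ R : {R : DyadicCube d // memQcal lam σ ω R ∧ Q.toSet ⊆ R.toSet},
          (σ R.1.toSet)⁻¹ *
            ∑' S : {S : DyadicCube d // memQcal lam σ ω S ∧ S.toSet ⊆ R.1.toSet},
              (lam S.1 : ℝ≥0∞) * (a S.1)⁻¹ * ω S.1.toSet)
    (hpos : ∀ Q : DyadicCube d, memQcal lam σ ω Q → 0 < dd Q ∧ dd Q < ∞) :
    ∀ P : DyadicCube d,
      (∑' Q : {Q : DyadicCube d // memQcal lam σ ω Q ∧ Q.toSet ⊆ P.toSet},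
        (lam Q.1 : ℝ≥0∞) * (dd Q.1)⁻¹ * ω Q.1.toSet) ≤ σ P.toSet :=
  stmt15_general d σ ω lam a ha dd hdd
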